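/- Under the drift condition PV ≤ λV off C and PV ≤ K on C (V ≥ 1, λ < 1), for 1 < r < λ^{-1} and x ∈ C, one has (H(r,x) − rH(1,x))/(r−1) ≤ λr(K−1)/((1−λ)(1−rλ)), where H(r,x) = E^x(∑_{n=1}^{τ} r^n V(X_n)) and τ is the first return time to C. -/

import Mathlib

/-!
Write `h n = hSeq κ C V n`, so that `h (n + 2) = P (1_{Cᶜ} h (n + 1))`. Integrating against `P`
and using `PV ≤ λ V` off `C`, a bound `c (V - 1)` off `C` on the partial sums
`∑ w (n + 1) h (n + 1)` gives the bound `d (V - 1)` on `∑ w n h (n + 1)` as soon as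
`(w 0 + c) λ ≤ d ≤ c`. By induction this yields, off `C`, `∑ h (n + 1) ≤ a (V - 1)` with
`a = λ / (1 - λ)` and `∑ (r ^ (n + 1) - 1) h (n + 1) ≤ b (V - 1)` with
`b = λ (r - 1) / ((1 - λ) (1 - r λ))`, the fixed points of these recursions. One last step at
`x ∈ C` gives `∑ (r ^ n - r) h n x ≤ r b (PV x - 1) ≤ r b (K - 1)`; these partial sum bounds also
give the summability needed to write `H(r,x) - r H(1,x)` as one series.
-/

open MeasureTheory ProbabilityTheory

/-- `hSeq κ C V n x = E^x (V (X_n) 1_{τ ≥ n})` where `τ = inf {n ≥ 1 : X_n ∈ C}`, so that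
`H(r,x) = E^x (∑_{n=1}^τ r^n V (X_n)) = ∑_{n} r^n hSeq κ C V n x`. -/
noncomputable def hSeq {S : Type*} [MeasurableSpace S] (κ : Kernel S S) (C : Set S)
    (V : S → ℝ) : ℕ → S → ℝ
  | 0 => fun _ => 0
  | 1 => fun x => ∫ y, V y ∂(κ x)
  | n + 2 => fun x => ∫ y, Set.indicator Cᶜ (hSeq κ C V (n + 1)) y ∂(κ x)

open Finset

theorem integral_indicator_compl_le_mul_sub_one {S : Type*} [MeasurableSpace S]
    {μ : Measure S} [IsProbabilityMeasure μ] {C : Set S} {V f : S → ℝ} {c : ℝ} (hc : 0 ≤ c)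
    (hV1 : ∀ x, 1 ≤ V x) (hV : Integrable V μ) (hf : ∀ z ∉ C, f z ≤ c * (V z - 1)) :
    ∫ z, Cᶜ.indicator f z ∂μ ≤ c * (∫ z, V z ∂μ - 1) := by
  have hint : Integrable (fun z => c * (V z - 1)) μ := (hV.sub (integrable_const 1)).const_mul c
  have hcalc : ∫ z, c * (V z - 1) ∂μ = c * (∫ z, V z ∂μ - 1) := by
    rw [integral_const_mul, integral_sub hV (integrable_const 1), integral_const]
    simp
  by_cases hfi : Integrable (Cᶜ.indicator f) μ
  · rw [← hcalc]
    refine integral_mono hfi hint fun z => ?_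
    by_cases hz : z ∈ C
    · simpa [hz] using mul_nonneg hc (sub_nonneg.2 (hV1 z))
    · simpa [hz] using hf z hz
  · have : 1 ≤ ∫ z, V z ∂μ := by
      simpa using integral_mono (integrable_const 1) hV hV1
    rw [integral_undef hfi]
    exact mul_nonneg hc (by linarith)

section

variable {S : Type*} [MeasurableSpace S] {κ : Kernel S S} {C : Set S} {V : S → ℝ} {lam : ℝ}

@[simp]
theorem hSeq_zero (x : S) : hSeq κ C V 0 x = 0 := rfl

@[simp]
theorem hSeq_one (x : S) : hSeq κ C V 1 x = ∫ y, V y ∂κ x := rfl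

theorem hSeq_nonneg (hV : ∀ x, 0 ≤ V x) : ∀ n x, 0 ≤ hSeq κ C V n x
  | 0, _ => le_rfl
  | 1, _ => integral_nonneg hV
  | n + 2, _ => integral_nonneg (Set.indicator_nonneg fun z _ => hSeq_nonneg hV (n + 1) z)

theorem measurable_hSeq (hC : MeasurableSet C) (hV : Measurable V) :
    ∀ n, Measurable (hSeq κ C V n)
  | 0 => measurable_const
  | 1 => (hV.stronglyMeasurable.integral_kernel (κ := κ)).measurable
  | n + 2 =>
    (((measurable_hSeq hC hV (n + 1)).indicator hC.compl).stronglyMeasurable.integral_kernel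
      (κ := κ)).measurable

theorem pow_sub_mul_hSeq_nonneg (hV : ∀ x, 0 ≤ V x) {r : ℝ} (hr : 1 ≤ r) :
    ∀ n x, 0 ≤ (r ^ n - r) * hSeq κ C V n x
  | 0, _ => by simp
  | n + 1, x => mul_nonneg (sub_nonneg.2 (le_self_pow₀ hr n.succ_ne_zero)) (hSeq_nonneg hV _ x)

/-- The drift condition (A2) at the points outside `C`. -/
structure GeometricDrift (κ : Kernel S S) (C : Set S) (V : S → ℝ) (lam : ℝ) : Prop where
  measurableSet : MeasurableSet C
  measurable : Measurable V
  one_le : ∀ x, 1 ≤ V x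
  integrable : ∀ x, Integrable V (κ x)
  integral_le : ∀ x ∉ C, ∫ y, V y ∂κ x ≤ lam * V x
  lam_nonneg : 0 ≤ lam
  lam_lt_one : lam < 1

namespace GeometricDrift

theorem nonneg (hd : GeometricDrift κ C V lam) (x : S) : 0 ≤ V x := zero_le_one.trans (hd.one_le x)

theorem indicator_compl_hSeq_le_of_le (hd : GeometricDrift κ C V lam) {n : ℕ}
    (h : ∀ y ∉ C, hSeq κ C V (n + 1) y ≤ lam ^ (n + 1) * V y) (z : S) :
    Cᶜ.indicator (hSeq κ C V (n + 1)) z ≤ lam ^ (n + 1) * V z := by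
  by_cases hz : z ∈ C
  · simpa [hz] using mul_nonneg (pow_nonneg hd.lam_nonneg _) (hd.nonneg z)
  · simpa [hz] using h z hz

theorem hSeq_succ_le_pow_mul (hd : GeometricDrift κ C V lam) :
    ∀ n, ∀ y ∉ C, hSeq κ C V (n + 1) y ≤ lam ^ (n + 1) * V y
  | 0, y, hy => by simpa using hd.integral_le y hy
  | n + 1, y, hy => calc
      hSeq κ C V (n + 2) y = ∫ z, Cᶜ.indicator (hSeq κ C V (n + 1)) z ∂κ y := rfl
      _ ≤ ∫ z, lam ^ (n + 1) * V z ∂κ y :=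
        integral_mono_of_nonneg
          (.of_forall (Set.indicator_nonneg fun z _ => hSeq_nonneg hd.nonneg _ z))
          ((hd.integrable y).const_mul _)
          (.of_forall (hd.indicator_compl_hSeq_le_of_le (hSeq_succ_le_pow_mul hd n)))
      _ = lam ^ (n + 1) * ∫ z, V z ∂κ y := integral_const_mul _ _
      _ ≤ lam ^ (n + 1) * (lam * V y) := by
        gcongr
        · exact pow_nonneg hd.lam_nonneg _
        · exact hd.integral_le y hy
      _ = lam ^ (n + 2) * V y := by ring

theorem integrable_indicator_compl_hSeq (hd : GeometricDrift κ C V lam) (n : ℕ) (x : S) :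
    Integrable (Cᶜ.indicator (hSeq κ C V (n + 1))) (κ x) := by
  refine ((hd.integrable x).const_mul (lam ^ (n + 1))).mono'
    ((measurable_hSeq hd.measurableSet hd.measurable _).indicator
      hd.measurableSet.compl).aestronglyMeasurable (.of_forall fun z => ?_)
  rw [Real.norm_of_nonneg (Set.indicator_nonneg (fun z _ => hSeq_nonneg hd.nonneg _ z) z)]
  exact hd.indicator_compl_hSeq_le_of_le (hd.hSeq_succ_le_pow_mul n) z

theorem sum_mul_hSeq_add_two (hd : GeometricDrift κ C V lam) (w : ℕ → ℝ) (N : ℕ) (x : S) :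
    ∑ n ∈ range N, w n * hSeq κ C V (n + 2) x =
      ∫ z, Cᶜ.indicator (fun z => ∑ n ∈ range N, w n * hSeq κ C V (n + 1) z) z ∂κ x := by
  have hind : Cᶜ.indicator (fun z => ∑ n ∈ range N, w n * hSeq κ C V (n + 1) z) =
      fun z => ∑ n ∈ range N, w n * Cᶜ.indicator (hSeq κ C V (n + 1)) z := by
    ext z
    by_cases hz : z ∈ C <;> simp [hz]
  rw [hind, integral_finsetSum _ fun n _ => (hd.integrable_indicator_compl_hSeq n x).const_mul _]
  exact sum_congr rfl fun n _ => (integral_const_mul _ _).symm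

variable [IsMarkovKernel κ]

theorem one_le_integral (hd : GeometricDrift κ C V lam) (x : S) : 1 ≤ ∫ y, V y ∂κ x := by
  simpa using integral_mono (integrable_const 1) (hd.integrable x) hd.one_le

theorem sum_mul_hSeq_add_two_le (hd : GeometricDrift κ C V lam) (w : ℕ → ℝ) {c : ℝ}
    (hc : 0 ≤ c) (N : ℕ)
    (hw : ∀ z ∉ C, ∑ n ∈ range N, w n * hSeq κ C V (n + 1) z ≤ c * (V z - 1)) (x : S) :
    ∑ n ∈ range N, w n * hSeq κ C V (n + 2) x ≤ c * (∫ z, V z ∂κ x - 1) := by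
  rw [hd.sum_mul_hSeq_add_two]
  exact integral_indicator_compl_le_mul_sub_one hc hd.one_le (hd.integrable x) hw

theorem sum_mul_hSeq_succ_le_of_notMem (hd : GeometricDrift κ C V lam) (w : ℕ → ℝ)
    {c d : ℝ} (hc : 0 ≤ c) (hw0 : 0 ≤ w 0) (hcd : (w 0 + c) * lam ≤ d) (hdc : d ≤ c) (N : ℕ)
    (hw : ∀ z ∉ C, ∑ n ∈ range N, w (n + 1) * hSeq κ C V (n + 1) z ≤ c * (V z - 1))
    {y : S} (hy : y ∉ C) :
    ∑ n ∈ range (N + 1), w n * hSeq κ C V (n + 1) y ≤ d * (V y - 1) := by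
  have hstep := hd.sum_mul_hSeq_add_two_le (fun n => w (n + 1)) hc N hw y
  have hdrift := hd.integral_le y hy
  have hV := hd.one_le y
  rw [sum_range_succ', zero_add, hSeq_one]
  calc ∑ n ∈ range N, w (n + 1) * hSeq κ C V (n + 2) y + w 0 * ∫ z, V z ∂κ y
      ≤ (w 0 + c) * ∫ z, V z ∂κ y - c := by linarith
    _ ≤ (w 0 + c) * (lam * V y) - c := by gcongr
    _ ≤ d * V y - c := by nlinarith
    _ ≤ d * (V y - 1) := by linarith

theorem sum_hSeq_succ_le (hd : GeometricDrift κ C V lam) (N : ℕ) :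
    ∀ y ∉ C, ∑ n ∈ range N, hSeq κ C V (n + 1) y ≤ lam / (1 - lam) * (V y - 1) := by
  have h1 : 0 < 1 - lam := sub_pos.2 hd.lam_lt_one
  have ha : 0 ≤ lam / (1 - lam) := div_nonneg hd.lam_nonneg h1.le
  induction N with
  | zero => exact fun y _ => by simpa using mul_nonneg ha (sub_nonneg.2 (hd.one_le y))
  | succ N ih =>
    intro y hy
    simpa using hd.sum_mul_hSeq_succ_le_of_notMem (fun _ => 1) ha zero_le_one
      (le_of_eq (by field_simp; ring)) le_rfl N (by simpa using ih) hy

theorem sum_pow_sub_one_mul_hSeq_succ_le (hd : GeometricDrift κ C V lam) {r : ℝ}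
    (hr : 1 ≤ r) (hrl : r * lam < 1) (N : ℕ) :
    ∀ y ∉ C, ∑ n ∈ range N, (r ^ (n + 1) - 1) * hSeq κ C V (n + 1) y ≤
      lam * (r - 1) / ((1 - lam) * (1 - r * lam)) * (V y - 1) := by
  have h1 : 0 < 1 - lam := sub_pos.2 hd.lam_lt_one
  have h2 : 0 < 1 - r * lam := sub_pos.2 hrl
  set a := lam / (1 - lam)
  set b := lam * (r - 1) / ((1 - lam) * (1 - r * lam))
  have ha : 0 ≤ a := div_nonneg hd.lam_nonneg h1.le
  have hb : 0 ≤ b := div_nonneg (mul_nonneg hd.lam_nonneg (by linarith)) (by positivity)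
  induction N with
  | zero => exact fun y _ => by simpa using mul_nonneg hb (sub_nonneg.2 (hd.one_le y))
  | succ N ih =>
    intro y hy
    refine hd.sum_mul_hSeq_succ_le_of_notMem (fun n => r ^ (n + 1) - 1) (c := r * b + (r - 1) * a)
      (by positivity) (by simpa using hr) (le_of_eq ?_) (by nlinarith) N (fun z hz => ?_) hy
    · simp only [a, b]
      field_simp
      ring
    · have hsplit : ∑ n ∈ range N, (r ^ (n + 1 + 1) - 1) * hSeq κ C V (n + 1) z =
          r * ∑ n ∈ range N, (r ^ (n + 1) - 1) * hSeq κ C V (n + 1) z +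
            (r - 1) * ∑ n ∈ range N, hSeq κ C V (n + 1) z := by
        rw [mul_sum, mul_sum, ← sum_add_distrib]
        exact sum_congr rfl fun n _ => by ring
      rw [hsplit]
      have := mul_le_mul_of_nonneg_left (ih z hz) (by linarith : 0 ≤ r)
      have := mul_le_mul_of_nonneg_left (hd.sum_hSeq_succ_le N z hz) (by linarith : 0 ≤ r - 1)
      linarith

theorem sum_pow_sub_mul_hSeq_le (hd : GeometricDrift κ C V lam) {r : ℝ} (hr : 1 ≤ r)
    (hrl : r * lam < 1) (N : ℕ) (x : S) :
    ∑ n ∈ range N, (r ^ n - r) * hSeq κ C V n x ≤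
      r * (lam * (r - 1) / ((1 - lam) * (1 - r * lam))) * (∫ y, V y ∂κ x - 1) := by
  have hb : 0 ≤ lam * (r - 1) / ((1 - lam) * (1 - r * lam)) :=
    div_nonneg (mul_nonneg hd.lam_nonneg (by linarith))
      (mul_nonneg (sub_nonneg.2 hd.lam_lt_one.le) (by linarith))
  calc ∑ n ∈ range N, (r ^ n - r) * hSeq κ C V n x
      ≤ ∑ n ∈ range (N + 2), (r ^ n - r) * hSeq κ C V n x :=
        sum_le_sum_of_subset_of_nonneg (range_subset_range.2 (by omega))
          fun n _ _ => pow_sub_mul_hSeq_nonneg hd.nonneg hr n x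
    _ = ∑ n ∈ range N, (r ^ (n + 2) - r) * hSeq κ C V (n + 2) x := by
        simp [sum_range_succ']
    _ ≤ _ := by
        refine hd.sum_mul_hSeq_add_two_le (fun n => r ^ (n + 2) - r) (by positivity) N
          (fun z hz => ?_) x
        calc ∑ n ∈ range N, (r ^ (n + 2) - r) * hSeq κ C V (n + 1) z
            = r * ∑ n ∈ range N, (r ^ (n + 1) - 1) * hSeq κ C V (n + 1) z := by
              rw [mul_sum]
              exact sum_congr rfl fun n _ => by ring
          _ ≤ r * (lam * (r - 1) / ((1 - lam) * (1 - r * lam)) * (V z - 1)) := by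
              gcongr
              exact hd.sum_pow_sub_one_mul_hSeq_succ_le hr hrl N z hz
          _ = _ := by ring

theorem tsum_pow_mul_hSeq_sub_le (hd : GeometricDrift κ C V lam) {r : ℝ} (hr : 1 ≤ r)
    (hrl : r * lam < 1) (x : S) :
    (∑' n, r ^ n * hSeq κ C V n x) - r * ∑' n, hSeq κ C V n x ≤
      r * (lam * (r - 1) / ((1 - lam) * (1 - r * lam))) * (∫ y, V y ∂κ x - 1) := by
  have hnn := fun n => pow_sub_mul_hSeq_nonneg (κ := κ) (C := C) hd.nonneg hr n x
  have hbound := fun N => hd.sum_pow_sub_mul_hSeq_le hr hrl N x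
  have ha : 0 ≤ lam / (1 - lam) := div_nonneg hd.lam_nonneg (sub_nonneg.2 hd.lam_lt_one.le)
  have hsum : Summable fun n => hSeq κ C V n x :=
    (summable_nat_add_iff 2).1 <| summable_of_sum_range_le
      (fun n => hSeq_nonneg hd.nonneg _ x) fun N => by
        simpa using hd.sum_mul_hSeq_add_two_le (fun _ => 1) ha N
          (by simpa using hd.sum_hSeq_succ_le N) x
  have hsub : Summable fun n => (r ^ n - r) * hSeq κ C V n x :=
    summable_of_sum_range_le hnn hbound
  have hpow : Summable fun n => r ^ n * hSeq κ C V n x := by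
    simpa [sub_mul] using hsub.add (hsum.mul_left r)
  rw [← tsum_mul_left, ← hpow.tsum_sub (hsum.mul_left r)]
  simpa [sub_mul] using Real.tsum_le_of_sum_range_le hnn hbound

end GeometricDrift

end

theorem stmt15 {S : Type*} [MeasurableSpace S] (κ : Kernel S S) [IsMarkovKernel κ]
    (C : Set S) (hC : MeasurableSet C)
    (V : S → ℝ) (hVm : Measurable V) (hV1 : ∀ x, 1 ≤ V x)
    (lam K : ℝ) (hlam0 : 0 < lam) (hlam1 : lam < 1)
    (hVint : ∀ x, Integrable V (κ x))
    (hout : ∀ x ∉ C, ∫ y, V y ∂(κ x) ≤ lam * V x)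
    (hin : ∀ x ∈ C, ∫ y, V y ∂(κ x) ≤ K) :
    ∀ r : ℝ, 1 < r → r < lam⁻¹ → ∀ x ∈ C,
      ((∑' n, r ^ n * hSeq κ C V n x) - r * ∑' n, hSeq κ C V n x) / (r - 1) ≤
        lam * r * (K - 1) / ((1 - lam) * (1 - r * lam)) := by
  intro r hr hrlam x hx
  have hd : GeometricDrift κ C V lam := ⟨hC, hVm, hV1, hVint, hout, hlam0.le, hlam1⟩
  have hrl : r * lam < 1 := (lt_div_iff₀ hlam0).1 (by rwa [one_div])
  have hb : 0 ≤ r * (lam * (r - 1) / ((1 - lam) * (1 - r * lam))) := by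
    have : 0 < 1 - r * lam := by linarith
    have : 0 < 1 - lam := by linarith
    have : 0 < r - 1 := by linarith
    positivity
  rw [div_le_iff₀ (by linarith)]
  calc _ ≤ r * (lam * (r - 1) / ((1 - lam) * (1 - r * lam))) * (∫ y, V y ∂κ x - 1) :=
        hd.tsum_pow_mul_hSeq_sub_le hr.le hrl x
    _ ≤ r * (lam * (r - 1) / ((1 - lam) * (1 - r * lam))) * (K - 1) := by
        gcongr
        exact hin x hx
    _ = _ := by ring
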